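/- arXiv:2511.08969 — 3 statements merged into one kernel-verified Lean document; each statement's English description precedes it below -/
import Mathlib

section
/- Let ⋆ be the bilinear product on ℂ[S_n] defined on permutations by u ⋆ w = u if u = w and 0 otherwise (i.e., the 'Hadamard product' with respect to the permutation basis). For subsets I, I' ⊆ {1, ..., n-1}, define β(I) = ∏_{i ∈ I}(1 + s_i) with factors in increasing order. Then β(I) ⋆ β(I') = β(I ∩ I'). -/
/-!
Expanding the ordered product, β(I) = ∑_{J ⊆ I} s_J, where s_J is the increasing product of
the s_j with j ∈ J. The map J ↦ s_J is injective: s_J sends j to j + 1 when j ∈ J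
and to a number at most j otherwise. So β(I) is the 0/1 indicator of
{s_J : J ⊆ I}, and the Hadamard product of two indicators is the indicator of the
intersection, {s_J : J ⊆ I ∩ I'}.
-/

/-- β(I) = ∏_{i ∈ I} (1 + s_i) in ℂ[S_n], product in increasing order of i. -/
noncomputable def betaI (I : Finset ℕ) : MonoidAlgebra ℂ (Equiv.Perm ℕ) :=
  ((I.sort (· ≤ ·)).map (fun i =>
    (1 : MonoidAlgebra ℂ (Equiv.Perm ℕ)) +
      MonoidAlgebra.of ℂ (Equiv.Perm ℕ) (Equiv.swap i (i + 1)))).prod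

/-- The Hadamard product ⋆ on ℂ[S_n] with respect to the permutation basis:
the bilinear extension of u ⋆ w = u·δ_{u,w}, i.e. coefficientwise multiplication. -/
noncomputable def hstar (f g : MonoidAlgebra ℂ (Equiv.Perm ℕ)) :
    MonoidAlgebra ℂ (Equiv.Perm ℕ) :=
  MonoidAlgebra.ofCoeff (Finsupp.zipWith (· * ·) (mul_zero 0) f.coeff g.coeff)

lemma coeff_hstar (f g : MonoidAlgebra ℂ (Equiv.Perm ℕ)) (u : Equiv.Perm ℕ) :
    (hstar f g).coeff u = f.coeff u * g.coeff u :=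
  Finsupp.zipWith_apply (hf := mul_zero 0) ..

lemma prod_map_sort_insert_of_forall_lt {M : Type*} [Monoid M] (f : ℕ → M) {a : ℕ}
    {s : Finset ℕ} (ha : ∀ x ∈ s, a < x) :
    (((insert a s).sort (· ≤ ·)).map f).prod = f a * ((s.sort (· ≤ ·)).map f).prod := by
  rw [Finset.sort_insert _ (fun b hb => (ha b hb).le) (fun h => (ha a h).false),
    List.map_cons, List.prod_cons]

noncomputable def swapProd (J : Finset ℕ) : Equiv.Perm ℕ :=
  ((J.sort (· ≤ ·)).map (fun j => Equiv.swap j (j + 1))).prod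

lemma swapProd_insert {a : ℕ} {J : Finset ℕ} (ha : ∀ x ∈ J, a < x) :
    swapProd (insert a J) = Equiv.swap a (a + 1) * swapProd J :=
  prod_map_sort_insert_of_forall_lt _ ha

lemma swapProd_apply_of_forall_lt {J : Finset ℕ} {x : ℕ} (hx : ∀ j ∈ J, x < j) :
    swapProd J x = x := by
  induction J using Finset.induction_on_min with
  | empty => simp [swapProd]
  | insert a J ha ih =>
    have hxa : x < a := hx a (J.mem_insert_self a)
    rw [swapProd_insert ha, Equiv.Perm.mul_apply, ih fun j hj => hx j (J.mem_insert_of_mem hj)]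
    exact Equiv.swap_apply_of_ne_of_ne hxa.ne (by omega)

lemma swapProd_apply_of_mem {J : Finset ℕ} {j : ℕ} (hj : j ∈ J) : swapProd J j = j + 1 := by
  induction J using Finset.induction_on_min with
  | empty => simp at hj
  | insert a J ha ih =>
    rw [swapProd_insert ha, Equiv.Perm.mul_apply]
    rcases Finset.mem_insert.1 hj with rfl | hj
    · rw [swapProd_apply_of_forall_lt ha, Equiv.swap_apply_left]
    · have hja : a < j := ha j hj
      rw [ih hj]
      exact Equiv.swap_apply_of_ne_of_ne (by omega) (by omega)

lemma swapProd_apply_le_of_notMem {J : Finset ℕ} {j : ℕ} (hj : j ∉ J) : swapProd J j ≤ j := by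
  induction J using Finset.induction_on_min with
  | empty => simp [swapProd]
  | insert a J ha ih =>
    have hja : j ≠ a := fun h => hj (h ▸ J.mem_insert_self a)
    have hle : swapProd J j ≤ j := ih fun h => hj (J.mem_insert_of_mem h)
    rw [swapProd_insert ha, Equiv.Perm.mul_apply]
    rcases eq_or_ne (swapProd J j) a with h | h
    · rw [h, Equiv.swap_apply_left]; omega
    rcases eq_or_ne (swapProd J j) (a + 1) with h' | h'
    · rw [h', Equiv.swap_apply_right]; omega
    · rwa [Equiv.swap_apply_of_ne_of_ne h h']

lemma swapProd_apply_eq_succ_iff {J : Finset ℕ} {j : ℕ} : swapProd J j = j + 1 ↔ j ∈ J :=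
  ⟨fun h => by_contra fun hj => by have := swapProd_apply_le_of_notMem hj; omega,
    swapProd_apply_of_mem⟩

lemma swapProd_injective : Function.Injective swapProd := fun J J' h => by
  ext j
  rw [← swapProd_apply_eq_succ_iff, ← swapProd_apply_eq_succ_iff, h]

lemma betaI_eq_sum_powerset (I : Finset ℕ) :
    betaI I = ∑ J ∈ I.powerset, MonoidAlgebra.single (swapProd J) (1 : ℂ) := by
  induction I using Finset.induction_on_min with
  | empty => simp [betaI, swapProd, MonoidAlgebra.one_def]
  | insert a I ha ih =>
    rw [betaI, prod_map_sort_insert_of_forall_lt _ ha, ← betaI, ih,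
      Finset.sum_powerset_insert (fun h => (ha a h).false), add_mul, one_mul, Finset.mul_sum]
    congr 1
    refine Finset.sum_congr rfl fun J hJ => ?_
    rw [swapProd_insert fun x hx => ha x (Finset.mem_powerset.1 hJ hx), MonoidAlgebra.of_apply,
      MonoidAlgebra.single_mul_single, one_mul]

open Classical in
lemma coeff_betaI_swapProd (I J : Finset ℕ) :
    (betaI I).coeff (swapProd J) = if J ⊆ I then 1 else 0 := by
  simp [betaI_eq_sum_powerset, MonoidAlgebra.coeff_sum, Finsupp.single_apply,
    swapProd_injective.eq_iff]

lemma coeff_betaI_of_notMem_range (I : Finset ℕ) {u : Equiv.Perm ℕ}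
    (hu : u ∉ Set.range swapProd) : (betaI I).coeff u = 0 := by
  rw [betaI_eq_sum_powerset, MonoidAlgebra.coeff_sum, Finsupp.finsetSum_apply]
  exact Finset.sum_eq_zero fun J _ =>
    Finsupp.single_eq_of_ne fun h => hu ⟨J, h.symm⟩

theorem stmt3_general (I I' : Finset ℕ) :
    hstar (betaI I) (betaI I') = betaI (I ∩ I') := by
  ext u
  rw [coeff_hstar]
  by_cases hu : u ∈ Set.range swapProd
  · obtain ⟨J, rfl⟩ := hu
    simp only [coeff_betaI_swapProd, Finset.subset_inter_iff]
    by_cases hI : J ⊆ I <;> by_cases hI' : J ⊆ I' <;> simp [hI, hI']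
  · simp [coeff_betaI_of_notMem_range _ hu]

/-- β(I) ⋆ β(I') = β(I ∩ I') for I, I' ⊆ {1, ..., n-1}. -/
theorem stmt3 (n : ℕ) (I I' : Finset ℕ)
    (hI : I ⊆ Finset.Icc 1 (n - 1)) (hI' : I' ⊆ Finset.Icc 1 (n - 1)) :
    hstar (betaI I) (betaI I') = betaI (I ∩ I') :=
  stmt3_general I I'
end

section
/- Let Φ: Λ → Λ(x) ⊗ Λ(y) be the ring homomorphism of symmetric function rings determined by Φ(e_n) = e_n(x)·e_n(y) for all n ≥ 1. Then for any skew shape λ/μ with ℓ(λ) ≤ n, Φ(s_{(λ/μ)'}) = det( JT_{λ/μ}(x) * JT_{λ/μ}(y) ), where JT_{λ/μ}(x) is the matrix with (i,j) entry e_{λ_i - μ_j - i + j}(x) and * is the entrywise (Hadamard) product of matrices. -/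
/-- The elementary symmetric function e_k(x) in the x-variables (the left copy
of ℕ in ℕ ⊕ ℕ), as a formal power series in the two variable sets x, y. -/
noncomputable def eX (k : ℕ) : MvPowerSeries (ℕ ⊕ ℕ) ℚ :=
  fun d => if (∀ v ∈ d.support, d v ≤ 1 ∧ Sum.isLeft v = true) ∧
      (d.sum fun _ v => v) = k then 1 else 0

/-- The elementary symmetric function e_k(y) in the y-variables. -/
noncomputable def eY (k : ℕ) : MvPowerSeries (ℕ ⊕ ℕ) ℚ :=
  fun d => if (∀ v ∈ d.support, d v ≤ 1 ∧ Sum.isRight v = true) ∧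
      (d.sum fun _ v => v) = k then 1 else 0

/-- e_k(x) for integer k (zero for k < 0). -/
noncomputable def eIntX (k : ℤ) : MvPowerSeries (ℕ ⊕ ℕ) ℚ :=
  if k < 0 then 0 else eX k.toNat

/-- e_k(y) for integer k (zero for k < 0). -/
noncomputable def eIntY (k : ℤ) : MvPowerSeries (ℕ ⊕ ℕ) ℚ :=
  if k < 0 then 0 else eY k.toNat

/-- The ring of symmetric functions Λ = ℚ[e_1, e_2, ...], realized as the
polynomial ring with variable X k standing for e_{k+1}; the element e_k of Λ
for integer k (e_0 = 1, e_k = 0 for k < 0). -/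
noncomputable def EPoly (k : ℤ) : MvPolynomial ℕ ℚ :=
  if k < 0 then 0 else if k = 0 then 1 else MvPolynomial.X (k.toNat - 1)

lemma eX_zero : eX 0 = 1 := by
  ext d
  rw [MvPowerSeries.coeff_one]
  change (if _ ∧ Finsupp.degree d = 0 then _ else _) = _
  by_cases hd : d = 0 <;> simp [hd, Finsupp.degree_eq_zero_iff]

lemma eY_zero : eY 0 = 1 := by
  ext d
  rw [MvPowerSeries.coeff_one]
  change (if _ ∧ Finsupp.degree d = 0 then _ else _) = _
  by_cases hd : d = 0 <;> simp [hd, Finsupp.degree_eq_zero_iff]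

lemma aeval_EPoly (k : ℤ) :
    MvPolynomial.aeval (fun k : ℕ => eX (k + 1) * eY (k + 1)) (EPoly k) =
      eIntX k * eIntY k := by
  unfold EPoly eIntX eIntY
  rcases lt_trichotomy k 0 with hk | rfl | hk
  · simp [hk]
  · simp [eX_zero, eY_zero]
  · obtain ⟨j, rfl⟩ : ∃ j : ℕ, k = j + 1 := ⟨k.toNat - 1, by omega⟩
    simp [hk.not_gt, hk.ne']

theorem stmt9_general (l m : ℕ → ℕ) (n : ℕ) :
    MvPolynomial.aeval (fun k : ℕ => eX (k + 1) * eY (k + 1))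
        (Matrix.det (Matrix.of fun i j : Fin n =>
          EPoly ((l (i.1 + 1) : ℤ) - (m (j.1 + 1) : ℤ) - (i.1 + 1) + (j.1 + 1)))) =
      Matrix.det (Matrix.of fun i j : Fin n =>
        eIntX ((l (i.1 + 1) : ℤ) - (m (j.1 + 1) : ℤ) - (i.1 + 1) + (j.1 + 1)) *
          eIntY ((l (i.1 + 1) : ℤ) - (m (j.1 + 1) : ℤ) - (i.1 + 1) + (j.1 + 1))) := by
  rw [AlgHom.map_det]
  exact congrArg Matrix.det (Matrix.ext fun _ _ => aeval_EPoly _)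

/-- Let Φ : Λ → Λ(x) ⊗ Λ(y) be the ring homomorphism determined by
Φ(e_n) = e_n(x)·e_n(y).  For any skew shape λ/μ with ℓ(λ) ≤ L ≤ n,
Φ(s_{(λ/μ)'}) = det(JT_{λ/μ}(x) * JT_{λ/μ}(y)), where s_{(λ/μ)'} is given (per
the dual Jacobi–Trudi identity) by det(e_{λ_i - μ_j - i + j}) in Λ, and * is
the entrywise (Hadamard) product of the Jacobi–Trudi matrices. -/
theorem stmt9 (l m : ℕ → ℕ) (L n : ℕ)
    (hanti : ∀ i, l (i + 1) ≤ l i) (hmanti : ∀ i, m (i + 1) ≤ m i)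
    (hsub : ∀ i, m i ≤ l i) (hlen : ∀ i, L < i → l i = 0) (hLn : L ≤ n) :
    MvPolynomial.aeval (fun k : ℕ => eX (k + 1) * eY (k + 1))
        (Matrix.det (Matrix.of fun i j : Fin n =>
          EPoly ((l (i.1 + 1) : ℤ) - (m (j.1 + 1) : ℤ) - (i.1 + 1) + (j.1 + 1)))) =
      Matrix.det (Matrix.of fun i j : Fin n =>
        eIntX ((l (i.1 + 1) : ℤ) - (m (j.1 + 1) : ℤ) - (i.1 + 1) + (j.1 + 1)) *
          eIntY ((l (i.1 + 1) : ℤ) - (m (j.1 + 1) : ℤ) - (i.1 + 1) + (j.1 + 1))) :=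
  stmt9_general l m n
end

section
/- Define the H-matrix HJT_{λ/μ}(x) = (h_{λ_i - μ_j + i - j}(x))_{i,j=1}^{ℓ(λ)} using complete homogeneous symmetric functions with the opposite index convention. The determinant det( HJT_{(2,2,2)}(x) * HJT_{(2,2,2)}(y) ) of the entrywise product, expanded in monomials in x and y variables, has at least one negative coefficient (it is not monomial-positive). -/
/-!
Expanding the 3 × 3 determinant, each of its six terms is a product `F(x) * G(y)` of a monomial
`h_a h_b h_c` in the `x`-variables and the same monomial in the `y`-variables, so the
coefficient of a monomial `x^α y^β` in it is the product of the coefficients of `x^α` in `F` and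
of `y^β` in `G`. The coefficient of `x₀^m x₁^n` in `h_a h_b h_c` counts the ways of splitting
`(m, n)` into three pairs of sizes `a, b, c`; for `x₀ x₁⁵ y₀³ y₁³` the determinant's coefficient
is `3·7 - 2·3·6 + 3·4 + 2·4 - 2·3 = -1`.
-/

/-- The complete homogeneous symmetric function h_k(x) in the x-variables
(the left copy of ℕ in ℕ ⊕ ℕ), as a formal power series in the two variable
sets x, y: the coefficient of a monomial is 1 iff the monomial uses only
x-variables and has total degree k. -/
noncomputable def hX (k : ℕ) : MvPowerSeries (ℕ ⊕ ℕ) ℚ :=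
  fun d => if (∀ v ∈ d.support, Sum.isLeft v = true) ∧
      (d.sum fun _ v => v) = k then 1 else 0

/-- The complete homogeneous symmetric function h_k(y) in the y-variables. -/
noncomputable def hY (k : ℕ) : MvPowerSeries (ℕ ⊕ ℕ) ℚ :=
  fun d => if (∀ v ∈ d.support, Sum.isRight v = true) ∧
      (d.sum fun _ v => v) = k then 1 else 0

/-- h_k(x) for an integer index (h_k = 0 for k < 0). -/
noncomputable def hIntX (k : ℤ) : MvPowerSeries (ℕ ⊕ ℕ) ℚ :=
  if k < 0 then 0 else hX k.toNat

/-- h_k(y) for an integer index (h_k = 0 for k < 0). -/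
noncomputable def hIntY (k : ℤ) : MvPowerSeries (ℕ ⊕ ℕ) ℚ :=
  if k < 0 then 0 else hY k.toNat

open Finset

theorem Finsupp.eq_single_add_single_of_support_subset {σ M : Type*} [AddZeroClass M]
    [DecidableEq σ] {u v : σ} (huv : u ≠ v) {f : σ →₀ M} (hf : f.support ⊆ {u, v}) :
    f = single u (f u) + single v (f v) := by
  ext w
  by_cases hwu : w = u
  · subst hwu; simp [huv]
  by_cases hwv : w = v
  · subst hwv; simp [Ne.symm huv]
  have : w ∉ f.support := fun hw => by simpa [hwu, hwv] using hf hw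
  simp_all

theorem Finsupp.eq_single_add_single_of_add_eq {σ : Type*} [DecidableEq σ] {u v : σ}
    (huv : u ≠ v) {m n : ℕ} {x y : σ →₀ ℕ} (h : x + y = single u m + single v n) :
    x = single u (x u) + single v (x v) ∧ y = single u (m - x u) + single v (n - x v) ∧
      x u ≤ m ∧ x v ≤ n := by
  have hu : x u + y u = m := by simpa [huv] using DFunLike.congr_fun h u
  have hv : x v + y v = n := by simpa [Ne.symm huv] using DFunLike.congr_fun h v
  have hxy : ∀ z, z ≤ single u m + single v n → z = single u (z u) + single v (z v) :=
    fun _ hz => eq_single_add_single_of_support_subset huv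
      ((support_mono hz).trans support_single_add_single_subset)
  refine ⟨hxy x (h ▸ le_self_add), ?_, by omega, by omega⟩
  rw [hxy y (h ▸ le_add_self)]
  congr 2 <;> omega

theorem Finsupp.support_single_add_single_subset_of_mem {σ M : Type*} [AddZeroClass M]
    {s : Set σ} {u v : σ} (hu : u ∈ s) (hv : v ∈ s) (i j : M) :
    ↑(single u i + single v j).support ⊆ s := by
  classical
  intro w hw
  rcases mem_insert.1 (support_single_add_single_subset hw) with rfl | h
  · exact hu
  · rwa [mem_singleton.1 h]

namespace MvPowerSeries

variable {σ R : Type*} [Semiring R]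

def SupportedIn (s : Set σ) (F : MvPowerSeries σ R) : Prop :=
  ∀ d, coeff d F ≠ 0 → ↑d.support ⊆ s

theorem SupportedIn.mul {s : Set σ} {F G : MvPowerSeries σ R} (hF : F.SupportedIn s)
    (hG : G.SupportedIn s) : (F * G).SupportedIn s := by
  classical
  intro d hd v hv
  rw [coeff_mul] at hd
  obtain ⟨p, hp, hne⟩ := exists_ne_zero_of_sum_ne_zero hd
  rw [HasAntidiagonal.mem_antidiagonal] at hp
  subst hp
  rcases mem_union.1 (Finsupp.support_add hv) with h | h
  · exact hF p.1 (left_ne_zero_of_mul hne) h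
  · exact hG p.2 (right_ne_zero_of_mul hne) h

theorem coeff_add_mul_of_supportedIn {s t : Set σ} (hst : Disjoint s t)
    {F G : MvPowerSeries σ R} (hF : F.SupportedIn s) (hG : G.SupportedIn t)
    {a b : σ →₀ ℕ} (ha : ↑a.support ⊆ s) (hb : ↑b.support ⊆ t) :
    coeff (a + b) (F * G) = coeff a F * coeff b G := by
  classical
  rw [coeff_mul]
  refine sum_eq_single (a, b) (fun p hp hpab => ?_) (by simp)
  rw [HasAntidiagonal.mem_antidiagonal] at hp
  by_contra hne
  have hp1 := hF p.1 (left_ne_zero_of_mul hne)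
  have hp2 := hG p.2 (right_ne_zero_of_mul hne)
  -- at a variable in `s` only `p.1` and `a` can be nonzero, elsewhere only `p.2` and `b`
  have hfst : p.1 = a := by
    ext w
    have hw := DFunLike.congr_fun hp w
    simp only [Finsupp.add_apply] at hw
    by_cases hws : w ∈ s
    · have hwt : w ∉ t := hst.notMem_of_mem_left hws
      have h2 : p.2 w = 0 := by_contra fun h => hwt (hp2 (Finsupp.mem_support_iff.2 h))
      have hb0 : b w = 0 := by_contra fun h => hwt (hb (Finsupp.mem_support_iff.2 h))
      omega
    · have h1 : p.1 w = 0 := by_contra fun h => hws (hp1 (Finsupp.mem_support_iff.2 h))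
      have ha0 : a w = 0 := by_contra fun h => hws (ha (Finsupp.mem_support_iff.2 h))
      rw [h1, ha0]
  refine hpab (Prod.ext hfst ?_)
  rw [hfst] at hp
  exact add_left_cancel hp

theorem coeff_single_add_single_mul [DecidableEq σ] {u v : σ} (huv : u ≠ v) (m n : ℕ)
    (F G : MvPowerSeries σ R) :
    coeff (Finsupp.single u m + Finsupp.single v n) (F * G) =
      ∑ i ∈ range (m + 1), ∑ j ∈ range (n + 1),
        coeff (Finsupp.single u i + Finsupp.single v j) F *
          coeff (Finsupp.single u (m - i) + Finsupp.single v (n - j)) G := by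
  rw [coeff_mul, ← sum_product']
  refine sum_nbij' (fun p => (p.1 u, p.1 v))
    (fun q => (Finsupp.single u q.1 + Finsupp.single v q.2,
      Finsupp.single u (m - q.1) + Finsupp.single v (n - q.2))) ?_ ?_ ?_ ?_ ?_
  · intro p hp
    obtain ⟨-, -, hu, hv⟩ :=
      Finsupp.eq_single_add_single_of_add_eq huv (HasAntidiagonal.mem_antidiagonal.1 hp)
    simp only [mem_product, mem_range]
    omega
  · intro q hq
    simp only [mem_product, mem_range] at hq
    rw [HasAntidiagonal.mem_antidiagonal, add_add_add_comm, ← Finsupp.single_add,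
      ← Finsupp.single_add, Nat.add_sub_cancel' (by omega), Nat.add_sub_cancel' (by omega)]
  · intro p hp
    obtain ⟨h1, h2, -⟩ :=
      Finsupp.eq_single_add_single_of_add_eq huv (HasAntidiagonal.mem_antidiagonal.1 hp)
    exact Prod.ext h1.symm h2.symm
  · intro q _
    simp [huv, Ne.symm huv]
  · intro p hp
    obtain ⟨h1, h2, -⟩ :=
      Finsupp.eq_single_add_single_of_add_eq huv (HasAntidiagonal.mem_antidiagonal.1 hp)
    rw [← h1, ← h2]

variable (s : Set σ) [DecidablePred (· ∈ s)]

noncomputable def hsymmIn (k : ℕ) : MvPowerSeries σ R :=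
  fun d => if (∀ v ∈ d.support, v ∈ s) ∧ (d.sum fun _ e => e) = k then 1 else 0

theorem hsymmIn_supportedIn (k : ℕ) : (hsymmIn s k : MvPowerSeries σ R).SupportedIn s := by
  intro d hd w hw
  by_contra h
  exact hd (if_neg fun hc => h (hc.1 w hw))

variable {s}

theorem coeff_single_add_single_hsymmIn {u v : σ} (hu : u ∈ s) (hv : v ∈ s) (i j k : ℕ) :
    coeff (Finsupp.single u i + Finsupp.single v j) (hsymmIn s k : MvPowerSeries σ R) =
      if i + j = k then 1 else 0 := by
  have hsupp := Finsupp.support_single_add_single_subset_of_mem hu hv i j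
  rw [coeff_apply, hsymmIn, Finsupp.sum_add_index' (fun _ => rfl) (fun _ _ _ => rfl),
    Finsupp.sum_single_index rfl, Finsupp.sum_single_index rfl]
  exact if_congr (and_iff_right fun w hw => hsupp hw) rfl rfl

end MvPowerSeries

open MvPowerSeries

theorem hX_eq_hsymmIn (k : ℕ) : hX k = hsymmIn {v | v.isLeft} k := rfl

theorem hY_eq_hsymmIn (k : ℕ) : hY k = hsymmIn {v | v.isRight} k := rfl

theorem det_hadamard_jacobiTrudi_222 :
    Matrix.det (Matrix.of fun i j : Fin 3 =>
        hIntX ((2 : ℤ) + (i.1 + 1) - (j.1 + 1)) * hIntY ((2 : ℤ) + (i.1 + 1) - (j.1 + 1))) =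
      (hX 2 * hX 2 * hX 2) * (hY 2 * hY 2 * hY 2)
        - (hX 1 * hX 2 * hX 3) * (hY 1 * hY 2 * hY 3)
        - (hX 1 * hX 2 * hX 3) * (hY 1 * hY 2 * hY 3)
        + (hX 1 * hX 1 * hX 4) * (hY 1 * hY 1 * hY 4)
        + (hX 0 * hX 3 * hX 3) * (hY 0 * hY 3 * hY 3)
        - (hX 0 * hX 2 * hX 4) * (hY 0 * hY 2 * hY 4) := by
  rw [Matrix.det_fin_three]
  simp [hIntX, hIntY]
  ring

theorem hX_supportedIn (k : ℕ) : (hX k).SupportedIn {v | v.isLeft} := hsymmIn_supportedIn _ k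

theorem hY_supportedIn (k : ℕ) : (hY k).SupportedIn {v | v.isRight} := hsymmIn_supportedIn _ k

theorem coeff_add_mul_of_isLeft_of_isRight {d e : (ℕ ⊕ ℕ) →₀ ℕ}
    (hd : ↑d.support ⊆ {v : ℕ ⊕ ℕ | v.isLeft}) (he : ↑e.support ⊆ {v : ℕ ⊕ ℕ | v.isRight})
    (a b c : ℕ) :
    coeff (d + e) ((hX a * hX b * hX c) * (hY a * hY b * hY c)) =
      coeff d (hX a * hX b * hX c) * coeff e (hY a * hY b * hY c) :=
  coeff_add_mul_of_supportedIn
    (Set.disjoint_left.2 fun v hl hr => by cases v <;> simp_all)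
    (((hX_supportedIn a).mul (hX_supportedIn b)).mul (hX_supportedIn c))
    (((hY_supportedIn a).mul (hY_supportedIn b)).mul (hY_supportedIn c))
    hd he

theorem coeff_single_inl_add_single_inl_hX (p q i j k : ℕ) :
    coeff (Finsupp.single (Sum.inl p) i + Finsupp.single (Sum.inl q) j) (hX k) =
      if i + j = k then 1 else 0 := by
  rw [hX_eq_hsymmIn]
  exact coeff_single_add_single_hsymmIn (s := {v : ℕ ⊕ ℕ | v.isLeft}) rfl rfl i j k

theorem coeff_single_inr_add_single_inr_hY (p q i j k : ℕ) :
    coeff (Finsupp.single (Sum.inr p) i + Finsupp.single (Sum.inr q) j) (hY k) =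
      if i + j = k then 1 else 0 := by
  rw [hY_eq_hsymmIn]
  exact coeff_single_add_single_hsymmIn (s := {v : ℕ ⊕ ℕ | v.isRight}) rfl rfl i j k

theorem coeff_witness_det_hadamard_jacobiTrudi_222 :
    coeff ((Finsupp.single (Sum.inl 0 : ℕ ⊕ ℕ) 1 + Finsupp.single (Sum.inl 1) 5) +
        (Finsupp.single (Sum.inr 0 : ℕ ⊕ ℕ) 3 + Finsupp.single (Sum.inr 1) 3))
      (Matrix.det (Matrix.of fun i j : Fin 3 =>
        hIntX ((2 : ℤ) + (i.1 + 1) - (j.1 + 1)) * hIntY ((2 : ℤ) + (i.1 + 1) - (j.1 + 1)))) =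
      -1 := by
  have hx := Finsupp.support_single_add_single_subset_of_mem
    (s := {v : ℕ ⊕ ℕ | v.isLeft}) (u := Sum.inl 0) (v := Sum.inl 1) rfl rfl 1 5
  have hy := Finsupp.support_single_add_single_subset_of_mem
    (s := {v : ℕ ⊕ ℕ | v.isRight}) (u := Sum.inr 0) (v := Sum.inr 1) rfl rfl 3 3
  rw [det_hadamard_jacobiTrudi_222]
  simp only [map_add, map_sub, coeff_add_mul_of_isLeft_of_isRight hx hy]
  simp only [mul_assoc,
    coeff_single_add_single_mul (Sum.inl_injective.ne zero_ne_one),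
    coeff_single_add_single_mul (Sum.inr_injective.ne zero_ne_one),
    coeff_single_inl_add_single_inl_hX, coeff_single_inr_add_single_inr_hY,
    sum_range_succ, sum_range_zero]
  norm_num

/-- For λ = (2,2,2) and μ = ∅, the determinant of the entrywise
(Hadamard) product HJT_{(2,2,2)}(x) * HJT_{(2,2,2)}(y), where
HJT_{λ/μ}(x) = (h_{λ_i - μ_j + i - j}(x)), is not monomial-positive: some
monomial has a negative coefficient. -/
theorem stmt19 :
    ∃ d : (ℕ ⊕ ℕ) →₀ ℕ,
      MvPowerSeries.coeff d
        (Matrix.det (Matrix.of fun i j : Fin 3 =>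
          hIntX ((2 : ℤ) + (i.1 + 1) - (j.1 + 1)) *
            hIntY ((2 : ℤ) + (i.1 + 1) - (j.1 + 1)))) < 0 :=
  ⟨_, coeff_witness_det_hadamard_jacobiTrudi_222.trans_lt (by norm_num)⟩
end
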